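/- Let ε be a real number with 0 < ε ≤ 1 and b ≥ 1 an integer. Then ∏_{i=1}^{h} g_i((ε/b)·v) ≤ (1 − ε/(6·b·v^{q−2}))^{h} ≤ exp(−h·ε/(6·b·v^{q−2})). In particular, if h = ⌊α·v^{q−1}⌋ for a real α ∈ (0,1) with α·v^{q−1} ≥ 2, this product is at most exp(−α·ε·v/(12·b)). -/

import Mathlib

/-- `T p x` is the degree-`p` Taylor polynomial of the exponential function at `0`. -/
noncomputable def taylorExp (p : ℕ) (x : ℝ) : ℝ :=
  ∑ j ∈ Finset.range (p + 1), x ^ j / (Nat.factorial j : ℝ)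

/-- The round reward polynomial `g_i(x) = T_p(−x/(v^{q−1}·(3 − i/h)))`. -/
noncomputable def roundPoly (v h p q : ℕ) (i : ℕ) (x : ℝ) : ℝ :=
  taylorExp p (-(x / ((v : ℝ) ^ (q - 1) * (3 - (i : ℝ) / (h : ℝ)))))

open Finset Real

/-! Each factor has argument `y = ε / (b · v^(q-2) · (3 - i/h))`, which lies between
`ε / (3 b v^(q-2))` and `1/2`. On `[0, 1/2]` the Taylor polynomial `T_p(-y)` is within
`(3/4) y²` of `1 - y`, hence in `[0, 1 - y/2]`, so every factor is at most `1 - t` with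
`t = ε / (6 b v^(q-2))`. Then `(1 - t)^h ≤ exp(-h t)`, and `h = ⌊α v^(q-1)⌋₊ ≥ α v^(q-1) / 2`. -/

lemma abs_taylorExp_sub_one_add_le {p : ℕ} (hp : 1 ≤ p) {x : ℝ} (hx : |x| ≤ 1) :
    |taylorExp p x - (1 + x)| ≤ 3 / 4 * x ^ 2 := by
  have htail : taylorExp p x - (1 + x) = ∑ m ∈ range (p + 1) with 2 ≤ m, x ^ m / m.factorial := by
    rw [taylorExp, ← sum_range_sub_sum_range (by omega : 2 ≤ p + 1)]
    simp [sum_range_succ]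
  calc |taylorExp p x - (1 + x)|
      ≤ ∑ m ∈ range (p + 1) with 2 ≤ m, |x ^ m / m.factorial| :=
        htail ▸ abs_sum_le_sum_abs _ _
    _ ≤ ∑ m ∈ range (p + 1) with 2 ≤ m, x ^ 2 * (1 / m.factorial) := by
        gcongr with m hm
        rw [abs_div, abs_pow, Nat.abs_cast, ← mul_one_div, ← sq_abs x]
        gcongr ?_ * _
        exact pow_le_pow_of_le_one (abs_nonneg x) hx (mem_filter.1 hm).2
    _ = x ^ 2 * ∑ m ∈ range (p + 1) with 2 ≤ m, (1 / m.factorial : ℝ) := by rw [mul_sum]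
    _ ≤ x ^ 2 * (3 / 4) := by
        gcongr
        convert Complex.sum_div_factorial_le (α := ℝ) 2 (p + 1) two_pos using 1
        norm_num
    _ = 3 / 4 * x ^ 2 := mul_comm _ _

lemma taylorExp_neg_mem_Icc {p : ℕ} (hp : 1 ≤ p) {y : ℝ} (hy0 : 0 ≤ y) (hy : y ≤ 1 / 2) :
    0 ≤ taylorExp p (-y) ∧ taylorExp p (-y) ≤ 1 - y / 2 := by
  have hclose := abs_le.1 (abs_taylorExp_sub_one_add_le hp (x := -y) (by
    rw [abs_neg, abs_of_nonneg hy0]; linarith))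
  constructor <;> nlinarith [hclose.1, hclose.2]

lemma roundPoly_eq_taylorExp {v : ℕ} (hv : v ≠ 0) {q : ℕ} (hq : 2 ≤ q) (h p i : ℕ) (ε b : ℝ) :
    roundPoly v h p q i (ε / b * v) = taylorExp p (-(ε / (b * v ^ (q - 2) * (3 - i / h)))) := by
  have hpow : (v : ℝ) ^ (q - 1) = v ^ (q - 2) * v := (pow_sub_one_mul (by omega) _).symm
  rw [roundPoly, hpow, mul_right_comm, mul_div_mul_right _ _ (by exact_mod_cast hv), div_div,
    mul_assoc]

lemma roundPoly_mem_Icc {v h p q i : ℕ} (hv : 1 ≤ v) (hp : 1 ≤ p) (hq : 2 ≤ q) (hi : i ≤ h)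
    {ε : ℝ} (hε0 : 0 ≤ ε) (hε1 : ε ≤ 1) {b : ℕ} (hb : 1 ≤ b) :
    0 ≤ roundPoly v h p q i (ε / b * v) ∧
      roundPoly v h p q i (ε / b * v) ≤ 1 - ε / (6 * b * v ^ (q - 2)) := by
  rw [roundPoly_eq_taylorExp (by omega) hq]
  have hb1 : (1 : ℝ) ≤ b := by exact_mod_cast hb
  have hV : (1 : ℝ) ≤ (v : ℝ) ^ (q - 2) := one_le_pow₀ (by exact_mod_cast hv)
  have hih : (i : ℝ) / h ≤ 1 := div_le_one_of_le₀ (by exact_mod_cast hi) h.cast_nonneg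
  have hc2 : 2 ≤ 3 - (i : ℝ) / h := by linarith
  have hc3 : 3 - (i : ℝ) / h ≤ 3 := by linarith [(by positivity : (0 : ℝ) ≤ i / h)]
  have hy : ε / (b * v ^ (q - 2) * (3 - i / h)) ≤ 1 / 2 := by
    rw [div_le_iff₀ (by positivity)]
    nlinarith [mul_le_mul hb1 hV zero_le_one (by positivity)]
  have ht : ε / (6 * b * v ^ (q - 2)) ≤ ε / (b * v ^ (q - 2) * (3 - i / h)) / 2 := by
    rw [div_div]
    gcongr ε / ?_
    nlinarith [mul_pos (by positivity : (0 : ℝ) < b) (by positivity : (0 : ℝ) < v ^ (q - 2))]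
  obtain ⟨hlo, hhi⟩ := taylorExp_neg_mem_Icc hp (by positivity) hy
  exact ⟨hlo, by linarith⟩

lemma one_sub_pow_le_exp_neg_mul {t : ℝ} (ht : t ≤ 1) (n : ℕ) :
    (1 - t) ^ n ≤ exp (-(n * t)) :=
  calc (1 - t) ^ n ≤ exp (-t) ^ n := pow_le_pow_left₀ (sub_nonneg.2 ht) (one_sub_le_exp_neg t) n
    _ = exp (-(n * t)) := by rw [← exp_nat_mul, mul_neg]

theorem roundPoly_prod_small_general (v h p q : ℕ) (hv : 2 ≤ v) (hp : 2 ≤ p)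
    (hq : 2 ≤ q) (ε : ℝ) (hε0 : 0 < ε) (hε1 : ε ≤ 1) (b : ℕ) (hb : 1 ≤ b) :
    (∏ i ∈ Finset.Icc 1 h, roundPoly v h p q i (ε / (b : ℝ) * (v : ℝ))
        ≤ (1 - ε / (6 * (b : ℝ) * (v : ℝ) ^ (q - 2))) ^ h) ∧
    ((1 - ε / (6 * (b : ℝ) * (v : ℝ) ^ (q - 2))) ^ h
        ≤ Real.exp (-((h : ℝ) * ε / (6 * (b : ℝ) * (v : ℝ) ^ (q - 2))))) ∧
    (∀ α : ℝ, 0 < α → α < 1 → 2 ≤ α * (v : ℝ) ^ (q - 1) → h = ⌊α * (v : ℝ) ^ (q - 1)⌋₊ →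
        ∏ i ∈ Finset.Icc 1 h, roundPoly v h p q i (ε / (b : ℝ) * (v : ℝ))
          ≤ Real.exp (-(α * ε * (v : ℝ) / (12 * (b : ℝ))))) := by
  set t := ε / (6 * (b : ℝ) * (v : ℝ) ^ (q - 2)) with ht
  have hfactor (i : ℕ) (hi : i ∈ Icc 1 h) :
      0 ≤ roundPoly v h p q i (ε / b * v) ∧ roundPoly v h p q i (ε / b * v) ≤ 1 - t :=
    roundPoly_mem_Icc (by omega) (by omega) hq (mem_Icc.1 hi).2 hε0.le hε1 hb
  have hprod : ∏ i ∈ Icc 1 h, roundPoly v h p q i (ε / b * v) ≤ (1 - t) ^ h := by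
    simpa using prod_le_prod (fun i hi ↦ (hfactor i hi).1) (fun i hi ↦ (hfactor i hi).2)
  have ht1 : t ≤ 1 := by
    have hV : (1 : ℝ) ≤ (v : ℝ) ^ (q - 2) := one_le_pow₀ (by exact_mod_cast (by omega : 1 ≤ v))
    have hb1 : (1 : ℝ) ≤ b := by exact_mod_cast hb
    exact div_le_one_of_le₀ (by nlinarith) (by positivity)
  have hexp := one_sub_pow_le_exp_neg_mul ht1 h
  refine ⟨hprod, by rwa [mul_div_assoc], fun α _ _ hα2 hαh ↦ ?_⟩
  refine hprod.trans (hexp.trans (exp_le_exp.2 (neg_le_neg ?_)))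
  have hvq : (v : ℝ) ^ (q - 1) = v ^ (q - 2) * v := (pow_sub_one_mul (by omega) _).symm
  calc α * ε * v / (12 * b) = α * (v : ℝ) ^ (q - 1) / 2 * t := by
        rw [ht, hvq]; field_simp; ring
    _ ≤ h * t := by
        gcongr
        rw [hαh]
        exact (Nat.div_two_lt_floor (by linarith)).le

/-- reward upper bound in Proposition 4.6: for `0 < ε ≤ 1` and `b ≥ 1`,
`∏_{i=1}^{h} g_i((ε/b)·v) ≤ (1 − ε/(6·b·v^{q−2}))^h ≤ exp(−h·ε/(6·b·v^{q−2}))`; in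
particular, if `h = ⌊α·v^{q−1}⌋` for `α ∈ (0,1)` with `α·v^{q−1} ≥ 2`, the product is
at most `exp(−α·ε·v/(12·b))`. -/
theorem roundPoly_prod_small (v h p q : ℕ) (hv : 2 ≤ v) (hh : 1 ≤ h) (hp : 2 ≤ p)
    (hq : 2 ≤ q) (ε : ℝ) (hε0 : 0 < ε) (hε1 : ε ≤ 1) (b : ℕ) (hb : 1 ≤ b) :
    (∏ i ∈ Finset.Icc 1 h, roundPoly v h p q i (ε / (b : ℝ) * (v : ℝ))
        ≤ (1 - ε / (6 * (b : ℝ) * (v : ℝ) ^ (q - 2))) ^ h) ∧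
    ((1 - ε / (6 * (b : ℝ) * (v : ℝ) ^ (q - 2))) ^ h
        ≤ Real.exp (-((h : ℝ) * ε / (6 * (b : ℝ) * (v : ℝ) ^ (q - 2))))) ∧
    (∀ α : ℝ, 0 < α → α < 1 → 2 ≤ α * (v : ℝ) ^ (q - 1) → h = ⌊α * (v : ℝ) ^ (q - 1)⌋₊ →
        ∏ i ∈ Finset.Icc 1 h, roundPoly v h p q i (ε / (b : ℝ) * (v : ℝ))
          ≤ Real.exp (-(α * ε * (v : ℝ) / (12 * (b : ℝ))))) :=
  roundPoly_prod_small_general v h p q hv hp hq ε hε0 hε1 b hb
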